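/- arXiv:1204.1677 — 4 statements merged into one kernel-verified Lean document; each statement's English description precedes it below -/
import Mathlib

section
/- Let A be an invertible n×n complex matrix. Then there exists a decomposition A = U T V†, where U and V are n×n unitary matrices and T is an n×n upper-triangular matrix all of whose diagonal entries are equal to the geometric mean of the singular values of A, i.e., every diagonal entry of T equals |det A|^{1/n}, which is real and positive. -/
/-!
The decomposition is built one column at a time. Let `c = |det A| ^ (1 / n)`. The eigenvalues of
`Aᴴ * A` are positive with product `|det A| ^ 2 = (c ^ 2) ^ n`, so `c ^ 2` lies between two of them,
and a suitable combination of the corresponding eigenvectors is a unit vector `v` with `‖A v‖ = c`.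
Completing `v` and `A v / c` to unitary matrices `V₁`, `U₁` makes the first column of
`U₁ᴴ * A * V₁` equal to `c e₀`; its trailing `(n - 1) × (n - 1)` block then has
`|det| = c ^ (n - 1)`, and induction finishes the proof.
-/

open Matrix

theorem exists_le_and_le_of_prod_eq_pow {ι : Type*} [Fintype ι] [Nonempty ι] {f : ι → ℝ} {d : ℝ}
    (hf : ∀ i, 0 < f i) (hd : 0 < d) (h : ∏ i, f i = d ^ Fintype.card ι) :
    ∃ i j, f i ≤ d ∧ d ≤ f j := by
  obtain ⟨i, hi⟩ : ∃ i, f i ≤ d := by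
    by_contra! hlt
    have := Finset.prod_lt_prod_of_nonempty (fun _ _ => hd) (fun i _ => hlt i) Finset.univ_nonempty
    simp [h] at this
  obtain ⟨j, hj⟩ : ∃ j, d ≤ f j := by
    by_contra! hlt
    have := Finset.prod_lt_prod_of_nonempty (fun i _ => hf i) (fun i _ => hlt i)
      Finset.univ_nonempty
    simp [h] at this
  exact ⟨i, j, hi, hj⟩

section RCLike

variable {𝕜 : Type*} [RCLike 𝕜] {ι : Type*} [Fintype ι]

theorem star_mulVec_dotProduct (M : Matrix ι ι 𝕜) (v w : ι → 𝕜) :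
    star (M *ᵥ v) ⬝ᵥ w = star v ⬝ᵥ (Mᴴ *ᵥ w) := by
  rw [star_mulVec, ← dotProduct_mulVec]

variable [DecidableEq ι]

namespace Matrix.IsHermitian

theorem exists_dotProduct_mulVec_eq_sum {H : Matrix ι ι 𝕜} (hH : H.IsHermitian)
    {p : ι → ℝ} (hp : 0 ≤ p) :
    ∃ v : ι → 𝕜, star v ⬝ᵥ v = (∑ k, p k : ℝ) ∧
      star v ⬝ᵥ (H *ᵥ v) = (∑ k, p k * hH.eigenvalues k : ℝ) := by
  set Q : Matrix ι ι 𝕜 := (hH.eigenvectorUnitary : Matrix ι ι 𝕜)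
  have hQ : Qᴴ * Q = 1 := Unitary.coe_star_mul_self _
  have hQHQ : Qᴴ * H * Q = diagonal (RCLike.ofReal ∘ hH.eigenvalues) := by
    have := hH.conjStarAlgAut_star_eigenvectorUnitary
    rwa [Unitary.conjStarAlgAut_star_apply] at this
  -- in the eigenbasis `Q` the coordinates `√p` turn both forms into `p`-weighted sums
  set w : ι → 𝕜 := fun k => (√(p k) : ℝ)
  have hw (k : ι) : starRingEnd 𝕜 (w k) * w k = p k := by
    simp [w, ← RCLike.ofReal_mul, Real.mul_self_sqrt (hp k)]
  refine ⟨Q *ᵥ w, ?_, ?_⟩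
  · rw [star_mulVec_dotProduct, mulVec_mulVec, hQ, one_mulVec]
    simp only [dotProduct, Pi.star_apply, RCLike.star_def, hw]
    push_cast
    rfl
  · rw [star_mulVec_dotProduct, mulVec_mulVec, mulVec_mulVec, hQHQ]
    simp only [dotProduct, mulVec_diagonal, Pi.star_apply, RCLike.star_def, Function.comp_apply]
    push_cast
    exact Finset.sum_congr rfl fun k _ => by linear_combination (hH.eigenvalues k : 𝕜) * hw k

theorem exists_dotProduct_mulVec_eq {H : Matrix ι ι 𝕜} (hH : H.IsHermitian) {i j : ι} {d : ℝ}
    (hi : hH.eigenvalues i ≤ d) (hj : d ≤ hH.eigenvalues j) :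
    ∃ v : ι → 𝕜, star v ⬝ᵥ v = 1 ∧ star v ⬝ᵥ (H *ᵥ v) = d := by
  obtain ⟨a, b, ha, hb, hab, rfl⟩ : d ∈ segment ℝ (hH.eigenvalues i) (hH.eigenvalues j) := by
    rw [segment_eq_Icc (hi.trans hj)]
    exact ⟨hi, hj⟩
  set p : ι → ℝ := Pi.single i a + Pi.single j b
  have hp : 0 ≤ p := add_nonneg (Pi.single_nonneg.2 ha) (Pi.single_nonneg.2 hb)
  have hp₁ : ∑ k, p k = 1 := by simp [p, Finset.sum_add_distrib, hab]
  have hpμ : ∑ k, p k * hH.eigenvalues k = a * hH.eigenvalues i + b * hH.eigenvalues j := by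
    simp [p, Finset.sum_add_distrib, add_mul, Pi.single_apply]
  obtain ⟨v, hv, hHv⟩ := hH.exists_dotProduct_mulVec_eq_sum hp
  exact ⟨v, by simpa [hp₁] using hv, by rw [hHv, hpμ, smul_eq_mul, smul_eq_mul]⟩

end Matrix.IsHermitian

theorem exists_star_dotProduct_eq_one_and_mulVec_eq_sq [Nonempty ι] (A : Matrix ι ι 𝕜) {c : ℝ}
    (hc : 0 < c) (hA : ‖A.det‖ = c ^ Fintype.card ι) :
    ∃ v : ι → 𝕜, star v ⬝ᵥ v = 1 ∧ star (A *ᵥ v) ⬝ᵥ (A *ᵥ v) = (c ^ 2 : ℝ) := by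
  have hH : (Aᴴ * A).IsHermitian := isHermitian_conjTranspose_mul_self A
  have hprod : ∏ i, hH.eigenvalues i = (c ^ 2) ^ Fintype.card ι := by
    have := hH.det_eq_prod_eigenvalues
    rw [det_mul, det_conjTranspose, RCLike.star_def, RCLike.conj_mul, hA] at this
    rw [← pow_mul, mul_comm, pow_mul]
    exact_mod_cast this.symm
  have hpos (i : ι) : 0 < hH.eigenvalues i := by
    refine (eigenvalues_conjTranspose_mul_self_nonneg A i).lt_of_ne' fun h0 => ?_
    have := Finset.prod_eq_zero (Finset.mem_univ i) h0
    rw [hprod] at this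
    exact (pow_pos (pow_pos hc 2) _).ne' this
  obtain ⟨i, j, hi, hj⟩ := exists_le_and_le_of_prod_eq_pow hpos (by positivity) hprod
  obtain ⟨v, hv, hHv⟩ := hH.exists_dotProduct_mulVec_eq hi hj
  exact ⟨v, hv, by rw [star_mulVec_dotProduct, mulVec_mulVec, hHv]⟩

theorem exists_mem_unitaryGroup_mulVec_single_eq (i : ι) {v : ι → 𝕜} (hv : star v ⬝ᵥ v = 1) :
    ∃ U ∈ unitaryGroup ι 𝕜, U *ᵥ Pi.single i 1 = v := by
  have hv' : Orthonormal 𝕜 (({i} : Set ι).domRestrict fun _ => WithLp.toLp 2 v) := by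
    rw [orthonormal_iff_ite]
    rintro ⟨j, rfl⟩ ⟨k, rfl⟩
    rw [if_pos rfl, Set.domRestrict_apply, EuclideanSpace.inner_eq_star_dotProduct, dotProduct_comm]
    exact hv
  obtain ⟨b, hb⟩ := hv'.exists_orthonormalBasis_extension_of_card_eq (by simp)
  refine ⟨_, (EuclideanSpace.basisFun ι 𝕜).toMatrix_orthonormalBasis_mem_unitary b, ?_⟩
  ext j
  simp [Module.Basis.toMatrix_apply, hb i rfl]

theorem norm_det_of_mem_unitaryGroup {U : Matrix ι ι 𝕜} (hU : U ∈ unitaryGroup ι 𝕜) :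
    ‖U.det‖ = 1 :=
  CStarRing.norm_of_mem_unitary (det_of_mem_unitary hU)

theorem norm_det_star_mul_mul {U V : Matrix ι ι 𝕜} (hU : U ∈ unitaryGroup ι 𝕜)
    (hV : V ∈ unitaryGroup ι 𝕜) (A : Matrix ι ι 𝕜) : ‖(star U * A * V).det‖ = ‖A.det‖ := by
  simp [norm_det_of_mem_unitaryGroup (Unitary.star_mem hU), norm_det_of_mem_unitaryGroup hV]

theorem exists_star_mul_mul_mulVec_single_eq_smul (A : Matrix ι ι 𝕜) (i : ι) {c : ℝ} (hc : 0 < c)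
    (hA : ‖A.det‖ = c ^ Fintype.card ι) :
    ∃ U ∈ unitaryGroup ι 𝕜, ∃ V ∈ unitaryGroup ι 𝕜,
      (star U * A * V) *ᵥ Pi.single i 1 = (c : 𝕜) • Pi.single i 1 := by
  have : Nonempty ι := ⟨i⟩
  obtain ⟨v, hv, hAv⟩ := exists_star_dotProduct_eq_one_and_mulVec_eq_sq A hc hA
  have hc' : (c : 𝕜) ≠ 0 := RCLike.ofReal_ne_zero.2 hc.ne'
  set u : ι → 𝕜 := (c : 𝕜)⁻¹ • (A *ᵥ v)
  have hu : star u ⬝ᵥ u = 1 := by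
    simp only [u, star_smul, smul_dotProduct, dotProduct_smul, hAv, smul_eq_mul, star_inv₀,
      RCLike.star_def, RCLike.conj_ofReal]
    push_cast
    field_simp
  obtain ⟨U, hU, hUi⟩ := exists_mem_unitaryGroup_mulVec_single_eq i hu
  obtain ⟨V, hV, hVi⟩ := exists_mem_unitaryGroup_mulVec_single_eq i hv
  refine ⟨U, hU, V, hV, ?_⟩
  have hAv' : A *ᵥ v = (c : 𝕜) • u := by simp [u, smul_smul, hc']
  rw [← mulVec_mulVec, hVi, ← mulVec_mulVec, hAv', mulVec_smul, ← hUi, mulVec_mulVec,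
    Unitary.star_mul_self_of_mem hU, one_mulVec]

end RCLike

section Unitary

variable {α : Type*} [CommRing α] [StarRing α] {m n : Type*} [Fintype m] [Fintype n]

theorem reindex_mul_mul_star (e : m ≃ n) (P Q R : Matrix m m α) :
    reindex e e (P * Q * star R) = reindex e e P * reindex e e Q * star (reindex e e R) := by
  simp only [reindex_apply, submatrix_mul_equiv, star_eq_conjTranspose, conjTranspose_submatrix]

variable [DecidableEq m] [DecidableEq n]

theorem reindex_mem_unitaryGroup (e : m ≃ n) {U : Matrix m m α} (hU : U ∈ unitaryGroup m α) :
    reindex e e U ∈ unitaryGroup n α := by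
  rw [mem_unitaryGroup_iff'] at hU ⊢
  rw [star_eq_conjTranspose, conjTranspose_reindex, reindex_apply, reindex_apply,
    submatrix_mul_equiv, ← star_eq_conjTranspose, hU, submatrix_one_equiv]

theorem fromBlocks_one_zero_zero_mem_unitaryGroup {U : Matrix n n α} (hU : U ∈ unitaryGroup n α) :
    fromBlocks (1 : Matrix m m α) 0 0 U ∈ unitaryGroup (m ⊕ n) α := by
  rw [mem_unitaryGroup_iff', star_eq_conjTranspose] at hU ⊢
  simp [fromBlocks_conjTranspose, fromBlocks_multiply, hU, fromBlocks_one]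

theorem fromBlocks_zero₂₁_eq_mul_mul_star {C : Matrix m m α} {W : Matrix m n α}
    {A' U' T' V' : Matrix n n α} (hV' : V' ∈ unitaryGroup n α) (hA' : A' = U' * T' * star V') :
    fromBlocks C W 0 A' =
      fromBlocks 1 0 0 U' * fromBlocks C (W * V') 0 T' * star (fromBlocks 1 0 0 V') := by
  have hV'' : V' * V'ᴴ = 1 := Unitary.mul_star_self_of_mem hV'
  rw [star_eq_conjTranspose] at hA' ⊢
  simp [fromBlocks_conjTranspose, fromBlocks_multiply, Matrix.mul_assoc, hV'', hA']

end Unitary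

def finOneSumEquiv (n : ℕ) : Fin 1 ⊕ Fin n ≃ Fin (n + 1) where
  toFun := Sum.elim (fun _ => 0) Fin.succ
  invFun := Fin.cases (Sum.inl 0) Sum.inr
  left_inv := by rintro (i | i) <;> simp [Fin.fin_one_eq_zero]
  right_inv i := by cases i using Fin.cases <;> simp

@[simp] theorem finOneSumEquiv_symm_zero (n : ℕ) : (finOneSumEquiv n).symm 0 = Sum.inl 0 := rfl
@[simp] theorem finOneSumEquiv_symm_succ {n : ℕ} (i : Fin n) :
    (finOneSumEquiv n).symm i.succ = Sum.inr i := rfl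

section FinSucc

variable {α : Type*} [CommRing α] {n : ℕ}

theorem eq_reindex_fromBlocks_of_mulVec_single_zero {B : Matrix (Fin (n + 1)) (Fin (n + 1)) α}
    {c : α} (hB : B *ᵥ Pi.single 0 1 = c • Pi.single 0 1) :
    B = reindex (finOneSumEquiv n) (finOneSumEquiv n)
      (fromBlocks !![c] (B.submatrix (fun _ => 0) Fin.succ) 0 (B.submatrix Fin.succ Fin.succ)) := by
  have hB₀ (i : Fin (n + 1)) : B i 0 = (c • Pi.single 0 1 : Fin (n + 1) → α) i := by
    rw [← hB, mulVec_single_one, col_apply]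
  ext i j
  cases i using Fin.cases <;> cases j using Fin.cases <;> simp [hB₀]

theorem blockTriangular_reindex_fromBlocks {T : Matrix (Fin n) (Fin n) α}
    (hT : T.BlockTriangular id) (C : Matrix (Fin 1) (Fin 1) α) (W : Matrix (Fin 1) (Fin n) α) :
    (reindex (finOneSumEquiv n) (finOneSumEquiv n) (fromBlocks C W 0 T)).BlockTriangular id := by
  intro i j hji
  cases i using Fin.cases with
  | zero => exact absurd hji (Fin.not_lt_zero j)
  | succ i =>
    cases j using Fin.cases with
    | zero => simp
    | succ j => simpa using hT (Fin.succ_lt_succ_iff.1 hji)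

theorem reindex_fromBlocks_apply_self {T : Matrix (Fin n) (Fin n) α} {c : α}
    (hT : ∀ i, T i i = c) (W : Matrix (Fin 1) (Fin n) α) (i : Fin (n + 1)) :
    reindex (finOneSumEquiv n) (finOneSumEquiv n) (fromBlocks !![c] W 0 T) i i = c := by
  cases i using Fin.cases <;> simp [hT]

end FinSucc

theorem exists_unitary_blockTriangular_of_norm_det_eq_pow {𝕜 : Type*} [RCLike 𝕜] {n : ℕ}
    (A : Matrix (Fin n) (Fin n) 𝕜) {c : ℝ} (hc : 0 < c) (hA : ‖A.det‖ = c ^ n) :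
    ∃ U ∈ unitaryGroup (Fin n) 𝕜, ∃ V ∈ unitaryGroup (Fin n) 𝕜, ∃ T : Matrix (Fin n) (Fin n) 𝕜,
      T.BlockTriangular id ∧ (∀ i, T i i = c) ∧ A = U * T * star V := by
  induction n with
  | zero =>
    exact ⟨1, one_mem _, 1, one_mem _, 1, fun i => i.elim0, fun i => i.elim0, Subsingleton.elim _ _⟩
  | succ n ih =>
    obtain ⟨U₁, hU₁, V₁, hV₁, hB⟩ :=
      exists_star_mul_mul_mulVec_single_eq_smul A 0 hc (by rw [hA, Fintype.card_fin])
    have hdet := norm_det_star_mul_mul hU₁ hV₁ A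
    set B := star U₁ * A * V₁
    have hBblocks := eq_reindex_fromBlocks_of_mulVec_single_zero hB
    set e := finOneSumEquiv n
    set W := B.submatrix (fun _ => 0) Fin.succ
    set A' := B.submatrix Fin.succ Fin.succ
    have hA' : ‖A'.det‖ = c ^ n := by
      rw [hA, hBblocks, det_reindex_self, det_fromBlocks_zero₂₁, det_fin_one_of, norm_mul,
        RCLike.norm_ofReal, abs_of_pos hc, pow_succ'] at hdet
      exact mul_left_cancel₀ hc.ne' hdet
    obtain ⟨U', hU', V', hV', T', hT', hT'c, hA'eq⟩ := ih A' hA'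
    refine ⟨U₁ * reindex e e (fromBlocks 1 0 0 U'),
      mul_mem hU₁ (reindex_mem_unitaryGroup e (fromBlocks_one_zero_zero_mem_unitaryGroup hU')),
      V₁ * reindex e e (fromBlocks 1 0 0 V'),
      mul_mem hV₁ (reindex_mem_unitaryGroup e (fromBlocks_one_zero_zero_mem_unitaryGroup hV')),
      reindex e e (fromBlocks !![(c : 𝕜)] (W * V') 0 T'),
      blockTriangular_reindex_fromBlocks hT' _ _, reindex_fromBlocks_apply_self hT'c _, ?_⟩
    have hA_eq : A = U₁ * B * star V₁ := by
      simp only [B, ← Matrix.mul_assoc, Unitary.mul_star_self_of_mem hU₁, Matrix.one_mul]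
      rw [Matrix.mul_assoc, Unitary.mul_star_self_of_mem hV₁, Matrix.mul_one]
    rw [hA_eq, hBblocks, fromBlocks_zero₂₁_eq_mul_mul_star hV' hA'eq, reindex_mul_mul_star,
      star_mul]
    simp only [Matrix.mul_assoc]

/-- Geometric Mean Decomposition (GMD): any invertible `n × n` complex matrix `A` can be
written as `A = U * T * Vᴴ` with `U`, `V` unitary and `T` upper triangular whose diagonal
entries all equal `|det A| ^ (1/n)` (the geometric mean of the singular values of `A`),
a positive real number. -/
theorem gmd (n : ℕ) (A : Matrix (Fin n) (Fin n) ℂ) (hA : IsUnit A.det) :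
    ∃ U V T : Matrix (Fin n) (Fin n) ℂ,
      Uᴴ * U = 1 ∧ Vᴴ * V = 1 ∧
      (∀ j k : Fin n, k < j → T j k = 0) ∧
      (0 < ‖A.det‖ ^ ((1 : ℝ) / n)) ∧
      (∀ i : Fin n, T i i = ((‖A.det‖ ^ ((1 : ℝ) / n) : ℝ) : ℂ)) ∧
      A = U * T * Vᴴ := by
  have hc : 0 < ‖A.det‖ ^ ((1 : ℝ) / n) := Real.rpow_pos_of_pos (norm_pos_iff.2 hA.ne_zero) _
  have hcn : ‖A.det‖ = (‖A.det‖ ^ ((1 : ℝ) / n)) ^ n := by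
    rcases n.eq_zero_or_pos with rfl | hn
    · simp
    · rw [one_div, Real.rpow_inv_natCast_pow (norm_nonneg _) hn.ne']
  obtain ⟨U, hU, V, hV, T, hT, hTc, hAUTV⟩ :=
    exists_unitary_blockTriangular_of_norm_det_eq_pow A hc hcn
  exact ⟨U, V, T, Unitary.star_mul_self_of_mem hU, Unitary.star_mul_self_of_mem hV,
    fun _ _ h => hT h, hc, hTc, hAUTV⟩
end

section
/- Let A₁, A₂, A₃ be 2×2 complex matrices satisfying |det(A_i)| = 1 for i = 1, 2, 3, and let 𝒜_i denote the 8×8 block-diagonal matrix consisting of 4 copies of A_i on the diagonal. Then there exist complex matrices 𝒰₁, 𝒰₂, 𝒰₃ and 𝒱, each of dimensions 8 × 2 and each having orthonormal columns, such that for every i = 1, 2, 3 the 2×2 matrix 𝒰_i† 𝒜_i 𝒱 is upper triangular with both diagonal entries equal to 1. -/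
/-!
In block notation let `𝒱` have the columns `(e₁, e₂, 0, 0)/√2` and `(0, 0, e₁, e₂)/√2`. The columns
of `𝒜ᵢ 𝒱` are then `(w, 0)` and `(0, w)`, where `w ∈ ℂ⁴` is `Aᵢ / √2` read column by column. Giving
`𝒰ᵢ` the columns `(x, 0)` and `(0, x)` for a unit vector `x ∈ ℂ⁴` yields `𝒰ᵢᴴ 𝒜ᵢ 𝒱 = ⟪x, w⟫ • 1`.
A unit `x` with `⟪x, w⟫ = 1` exists once `‖w‖ ≥ 1`, namely `x = w / ‖w‖² + √(1 - ‖w‖⁻²) z` for a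
unit `z ⊥ w`; and `‖w‖² = ‖Aᵢ‖_F² / 2 ≥ |det Aᵢ| = 1`.
-/

open Matrix Module

section InnerProductSpace

variable {𝕜 E : Type*} [RCLike 𝕜] [NormedAddCommGroup E] [InnerProductSpace 𝕜 E]
  [FiniteDimensional 𝕜 E]

theorem exists_norm_eq_one_inner_eq_zero (hE : 2 ≤ finrank 𝕜 E) (w : E) :
    ∃ z : E, ‖z‖ = 1 ∧ inner 𝕜 z w = 0 := by
  have hspan : finrank 𝕜 (𝕜 ∙ w) ≤ 1 := by
    simpa using finrank_span_le_card (R := 𝕜) ({w} : Set E)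
  have hne : (𝕜 ∙ w)ᗮ ≠ ⊥ := by
    rw [Ne, ← Submodule.finrank_eq_zero]
    have := (𝕜 ∙ w).finrank_add_finrank_orthogonal
    omega
  obtain ⟨z, hz, hz0⟩ := Submodule.exists_mem_ne_zero_of_ne_bot hne
  refine ⟨(‖z‖⁻¹ : 𝕜) • z, norm_smul_inv_norm hz0, ?_⟩
  rw [inner_smul_left,
    inner_eq_zero_symm.mp (Submodule.mem_orthogonal_singleton_iff_inner_right.mp hz), mul_zero]

theorem exists_norm_eq_one_inner_eq_one (hE : 2 ≤ finrank 𝕜 E) {w : E} (hw : 1 ≤ ‖w‖) :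
    ∃ u : E, ‖u‖ = 1 ∧ inner 𝕜 u w = 1 := by
  obtain ⟨z, hz, hzw⟩ := exists_norm_eq_one_inner_eq_zero hE w
  set a : ℝ := (‖w‖ ^ 2)⁻¹
  have ha : a * ‖w‖ ^ 2 = 1 := inv_mul_cancel₀ (by positivity)
  have ha1 : a ≤ 1 := inv_le_one_of_one_le₀ (one_le_pow₀ hw)
  refine ⟨(a : 𝕜) • w + (√(1 - a) : 𝕜) • z, ?_, ?_⟩
  · have horth : inner 𝕜 ((a : 𝕜) • w) ((√(1 - a) : 𝕜) • z) = 0 := by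
      rw [inner_smul_left, inner_smul_right, inner_eq_zero_symm.mp hzw, mul_zero, mul_zero]
    rw [← pow_eq_one_iff_of_nonneg (norm_nonneg _) two_ne_zero, @norm_add_sq 𝕜, horth,
      norm_smul, norm_smul, hz]
    simp only [norm_algebraMap', Real.norm_eq_abs, mul_pow, sq_abs, map_zero, mul_zero, add_zero,
      mul_one, Real.sq_sqrt (sub_nonneg.mpr ha1)]
    linear_combination a * ha
  · rw [inner_add_left, inner_smul_left, inner_smul_left, hzw, inner_self_eq_norm_sq_to_K]
    simp only [RCLike.conj_ofReal, mul_zero, add_zero]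
    exact_mod_cast ha

end InnerProductSpace

namespace Matrix

variable {𝕜 α r s m n β : Type*}

/-- Column `j` of `blockSpread e X` carries column `k` of `X` in block `e.symm (j, k)`; the columns
of `blockSpread e X` therefore have disjoint block supports. -/
def blockSpread [Zero α] [DecidableEq m] (e : β ≃ m × n) (X : Matrix r n α) :
    Matrix (r × β) m α :=
  fun p j => if (e p.2).1 = j then X p.1 (e p.2).2 else 0

theorem blockDiagonal_const_mul_blockSpread [Fintype s] [Fintype β] [DecidableEq m]
    [DecidableEq β] [Semiring α] (e : β ≃ m × n) (B : Matrix r s α) (X : Matrix s n α) :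
    blockDiagonal (fun _ : β => B) * blockSpread e X = blockSpread e (B * X) := by
  ext ⟨i, b⟩ j
  simp only [mul_apply, Fintype.sum_prod_type, blockDiagonal_apply, blockSpread, ite_mul,
    zero_mul]
  simp [eq_comm (a := b)]

theorem blockSpread_conjTranspose_mul_blockSpread [Fintype r] [Fintype m] [Fintype n]
    [Fintype β] [DecidableEq m] [Semiring α] [StarRing α] (e : β ≃ m × n) (X Y : Matrix r n α) :
    (blockSpread e X)ᴴ * blockSpread e Y = (Xᴴ * Y).trace • (1 : Matrix m m α) := by
  ext j j'
  simp only [mul_apply, Fintype.sum_prod_type, conjTranspose_apply, blockSpread, trace, diag]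
  rw [Finset.sum_comm, ← e.symm.sum_comp]
  obtain rfl | h := eq_or_ne j j'
  · simp [Fintype.sum_prod_type]
  · simp [Fintype.sum_prod_type, h, Ne.symm h]

theorem two_mul_norm_det_le_sum_norm_sq [NormedCommRing α] [NormMulClass α]
    (B : Matrix (Fin 2) (Fin 2) α) : 2 * ‖B.det‖ ≤ ∑ i, ∑ j, ‖B i j‖ ^ 2 := by
  have hdet : ‖B.det‖ ≤ ‖B 0 0‖ * ‖B 1 1‖ + ‖B 0 1‖ * ‖B 1 0‖ := by
    rw [det_fin_two, ← norm_mul, ← norm_mul]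
    exact norm_sub_le _ _
  simp only [Fin.sum_univ_two]
  nlinarith [two_mul_le_add_sq ‖B 0 0‖ ‖B 1 1‖, two_mul_le_add_sq ‖B 0 1‖ ‖B 1 0‖]

variable [RCLike 𝕜] [Fintype r] [Fintype n]

theorem trace_conjTranspose_mul_eq_inner (X Y : Matrix r n 𝕜) :
    (Xᴴ * Y).trace = inner 𝕜 (WithLp.toLp 2 (Function.uncurry X) : EuclideanSpace 𝕜 (r × n))
      (WithLp.toLp 2 (Function.uncurry Y)) := by
  rw [EuclideanSpace.inner_toLp_toLp, dotProduct, Fintype.sum_prod_type, Finset.sum_comm]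
  simp only [trace, diag_apply, mul_apply, conjTranspose_apply, RCLike.star_def, mul_comm,
    Pi.star_apply]
  rfl

theorem exists_trace_conjTranspose_mul_eq_one {B : Matrix r n 𝕜}
    (hcard : 2 ≤ Fintype.card r * Fintype.card n) (hB : 1 ≤ ∑ i, ∑ j, ‖B i j‖ ^ 2) :
    ∃ X : Matrix r n 𝕜, (Xᴴ * X).trace = 1 ∧ (Xᴴ * B).trace = 1 := by
  set w : EuclideanSpace 𝕜 (r × n) := WithLp.toLp 2 (Function.uncurry B)
  have hw : 1 ≤ ‖w‖ := by
    have hsq : 1 ≤ ‖w‖ ^ 2 := by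
      rwa [EuclideanSpace.norm_sq_eq, Fintype.sum_prod_type]
    simpa using (one_le_sq_iff_one_le_abs ‖w‖).mp hsq
  obtain ⟨u, hu, huw⟩ := exists_norm_eq_one_inner_eq_one (𝕜 := 𝕜) (by simpa using hcard) hw
  have hu' : (WithLp.toLp 2 (Function.uncurry (of (Function.curry u))) :
      EuclideanSpace 𝕜 (r × n)) = u := rfl
  refine ⟨of (Function.curry u), ?_, ?_⟩
  · rw [trace_conjTranspose_mul_eq_inner, hu', inner_self_eq_norm_sq_to_K, hu]
    simp
  · rwa [trace_conjTranspose_mul_eq_inner, hu']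

theorem exists_conjTranspose_mul_blockDiagonal_mul_blockSpread_eq_one [Fintype s] [Fintype m]
    [Fintype β] [DecidableEq m] [DecidableEq β] (e : β ≃ m × n) (B : Matrix r s 𝕜)
    (V₀ : Matrix s n 𝕜) (hcard : 2 ≤ Fintype.card r * Fintype.card n)
    (hBV : 1 ≤ ∑ i, ∑ j, ‖(B * V₀) i j‖ ^ 2) :
    ∃ U : Matrix (r × β) m 𝕜,
      Uᴴ * U = 1 ∧ Uᴴ * blockDiagonal (fun _ : β => B) * blockSpread e V₀ = 1 := by
  obtain ⟨X, hXX, hXBV⟩ := exists_trace_conjTranspose_mul_eq_one hcard hBV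
  refine ⟨blockSpread e X, ?_, ?_⟩
  · rw [blockSpread_conjTranspose_mul_blockSpread, hXX, one_smul]
  · rw [Matrix.mul_assoc, blockDiagonal_const_mul_blockSpread,
      blockSpread_conjTranspose_mul_blockSpread, hXBV, one_smul]

end Matrix

/-- The explicit constructive case `n = 2`, `K = 3`, `N = 4` of the nearly-optimal `K`-GMD:
for `2 × 2` complex matrices `A₁, A₂, A₃` with `|det Aᵢ| = 1`, the `8 × 8` block-diagonal
extensions (4 copies of each `Aᵢ`) admit `8 × 2` matrices `𝒰₁, 𝒰₂, 𝒰₃, 𝒱` with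
orthonormal columns such that each `2 × 2` matrix `𝒰ᵢᴴ 𝒜ᵢ 𝒱` is upper triangular with
both diagonal entries equal to `1`. -/
theorem space_time_triangularization_n2_K3_N4
    (A : Fin 3 → Matrix (Fin 2) (Fin 2) ℂ)
    (hdet : ∀ i, ‖(A i).det‖ = 1) :
    ∃ (U : Fin 3 → Matrix (Fin 2 × Fin 4) (Fin 2) ℂ)
      (V : Matrix (Fin 2 × Fin 4) (Fin 2) ℂ),
      (∀ i, (U i)ᴴ * U i = 1) ∧ Vᴴ * V = 1 ∧
      (∀ i, ((U i)ᴴ * Matrix.blockDiagonal (fun _ : Fin 4 => A i) * V) 1 0 = 0) ∧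
      (∀ i, ((U i)ᴴ * Matrix.blockDiagonal (fun _ : Fin 4 => A i) * V) 0 0 = 1) ∧
      (∀ i, ((U i)ᴴ * Matrix.blockDiagonal (fun _ : Fin 4 => A i) * V) 1 1 = 1) := by
  let e : Fin 4 ≃ Fin 2 × Fin 2 := (finProdFinEquiv (m := 2) (n := 2)).symm
  let V₀ : Matrix (Fin 2) (Fin 2) ℂ := (√2 : ℂ)⁻¹ • 1
  have hsqrt : (√2 : ℂ) * √2 = 2 := by
    rw [← Complex.ofReal_mul, Real.mul_self_sqrt zero_le_two, Complex.ofReal_ofNat]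
  have hV : (blockSpread e V₀)ᴴ * blockSpread e V₀ = 1 := by
    rw [blockSpread_conjTranspose_mul_blockSpread]
    simp only [V₀, conjTranspose_smul, star_inv₀, RCLike.star_def, Complex.conj_ofReal,
      conjTranspose_one, Algebra.mul_smul_comm, mul_one, trace_smul, trace_one, Fintype.card_fin,
      Nat.cast_ofNat, smul_eq_mul]
    rw [← mul_assoc, ← mul_inv, hsqrt, inv_mul_cancel₀ two_ne_zero, one_smul]
  have hAV : ∀ i, 1 ≤ ∑ j, ∑ k, ‖(A i * V₀) j k‖ ^ 2 := by
    intro i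
    have h := two_mul_norm_det_le_sum_norm_sq (A i)
    simp only [hdet i, mul_one, Fin.sum_univ_two, Algebra.mul_smul_comm, Matrix.smul_apply, smul_eq_mul,
      Complex.norm_mul, norm_inv, Complex.norm_real, Real.norm_eq_abs, mul_pow, inv_pow, sq_abs,
      Nat.ofNat_nonneg, Real.sq_sqrt, ← Finset.mul_sum, V₀] at h ⊢
    linarith
  choose U hU hUAV using fun i =>
    exists_conjTranspose_mul_blockDiagonal_mul_blockSpread_eq_one e (A i) V₀ (by simp) (hAV i)
  exact ⟨U, blockSpread e V₀, hU, hV, fun i => by simp [hUAV], fun i => by simp [hUAV],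
    fun i => by simp [hUAV]⟩
end

section
/- Let r₁, r₂ be positive real numbers with r₁·r₂ = 1. Then there exist 2×2 unitary complex matrices U and V such that U† · diag(r₁, r₂) · V is upper triangular with both diagonal entries equal to 1, i.e., U† diag(r₁,r₂) V = [[1, c],[0, 1]] for some complex number c. -/
open Matrix

set_option maxHeartbeats 1600000 in
lemma gmd_aux (r₁ r₂ : ℝ) (h₁ : 0 < r₁) (h₂ : 0 < r₂) (h : r₁ * r₂ = 1) (hge : 1 ≤ r₁) :
    ∃ U V : Matrix (Fin 2) (Fin 2) ℂ,
      Uᴴ * U = 1 ∧ Vᴴ * V = 1 ∧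
      ∃ c : ℂ, Uᴴ * Matrix.diagonal ![(r₁ : ℂ), (r₂ : ℂ)] * V = !![1, c; 0, 1] := by
  have hr₂ : r₂ ≤ 1 := by nlinarith
  set t : ℝ := (r₁^2 - 1)/(r₁^2 - r₂^2) with ht
  have ht0 : 0 ≤ t := div_nonneg (by nlinarith) (by nlinarith)
  have ht1 : t ≤ 1 := by
    rcases eq_or_lt_of_le hge with he | hl
    · simp [ht, ← he]
    · have hd : (0:ℝ) < r₁^2 - r₂^2 := by nlinarith
      rw [ht, div_le_one hd]; nlinarith
  have keymul : t * (r₁^2 - r₂^2) = r₁^2 - 1 := by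
    rcases eq_or_lt_of_le hge with he | hl
    · have : r₂ = 1 := by nlinarith
      simp [ht, ← he, this]
    · have hd : r₁^2 - r₂^2 ≠ 0 := by nlinarith
      rw [ht]; field_simp
  have key : r₁^2*(1-t) + r₂^2*t = 1 := by nlinarith [keymul]
  set s : ℝ := Real.sqrt t with hsdef
  set c : ℝ := Real.sqrt (1-t) with hcdef
  have hs : s^2 = t := Real.sq_sqrt ht0
  have hc : c^2 = 1 - t := Real.sq_sqrt (by linarith)
  refine ⟨!![((r₁*c : ℝ) : ℂ), (-(r₂*s) : ℝ); ((r₂*s : ℝ) : ℂ), ((r₁*c : ℝ) : ℂ)],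
          !![((c : ℝ) : ℂ), (-s : ℝ); ((s : ℝ) : ℂ), ((c : ℝ) : ℂ)], ?_, ?_, ?_⟩
  · ext i j
    fin_cases i <;> fin_cases j <;>
      simp [Matrix.mul_apply, Fin.sum_univ_two, Matrix.conjTranspose_apply, ← Complex.ofReal_mul,
        ← Complex.ofReal_add, ← Complex.ofReal_neg] <;>
      norm_cast <;> nlinarith [hs, hc, key, h]
  · ext i j
    fin_cases i <;> fin_cases j <;>
      simp [Matrix.mul_apply, Fin.sum_univ_two, Matrix.conjTranspose_apply, ← Complex.ofReal_mul,
        ← Complex.ofReal_add, ← Complex.ofReal_neg] <;>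
      norm_cast <;> nlinarith [hs, hc]
  · refine ⟨((c*s*(r₂^2 - r₁^2) : ℝ) : ℂ), ?_⟩
    ext i j
    fin_cases i <;> fin_cases j <;>
      simp [Matrix.mul_apply, Fin.sum_univ_two, Matrix.conjTranspose_apply,
        Matrix.diagonal_apply, Matrix.vecMul, dotProduct, ← Complex.ofReal_mul,
        ← Complex.ofReal_add, ← Complex.ofReal_neg] <;>
      norm_cast <;> nlinarith [hs, hc, key, h]

/-- 1-GMD of a `2 × 2` positive diagonal matrix of unit determinant: if `r₁ r₂ = 1` with
`r₁, r₂ > 0`, then there are `2 × 2` unitary matrices `U`, `V` such that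
`Uᴴ · diag(r₁, r₂) · V = [[1, c], [0, 1]]` for some complex `c`. -/
theorem gmd_diag_two (r₁ r₂ : ℝ) (h₁ : 0 < r₁) (h₂ : 0 < r₂) (h : r₁ * r₂ = 1) :
    ∃ U V : Matrix (Fin 2) (Fin 2) ℂ,
      Uᴴ * U = 1 ∧ Vᴴ * V = 1 ∧
      ∃ c : ℂ, Uᴴ * Matrix.diagonal ![(r₁ : ℂ), (r₂ : ℂ)] * V = !![1, c; 0, 1] := by
  rcases le_or_gt 1 r₁ with hge | hlt
  · exact gmd_aux r₁ r₂ h₁ h₂ h hge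
  · have hge2 : 1 ≤ r₂ := by nlinarith
    obtain ⟨U, V, hU, hV, c, hc⟩ := gmd_aux r₂ r₁ h₂ h₁ (by nlinarith) hge2
    set W : Matrix (Fin 2) (Fin 2) ℂ := !![0, 1; 1, 0] with hW
    have hWU : Wᴴ = W := by ext i j; fin_cases i <;> fin_cases j <;> simp [hW]
    have hWW : W * W = 1 := by
      ext i j; fin_cases i <;> fin_cases j <;> simp [hW, Matrix.mul_apply, Fin.sum_univ_two]
    have hswap : W * Matrix.diagonal ![(r₁ : ℂ), (r₂ : ℂ)] * W
        = Matrix.diagonal ![(r₂ : ℂ), (r₁ : ℂ)] := by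
      ext i j; fin_cases i <;> fin_cases j <;>
        simp [hW, Matrix.mul_apply, Fin.sum_univ_two, Matrix.diagonal_apply, Matrix.vecMul,
          dotProduct]
    refine ⟨W * U, W * V, ?_, ?_, c, ?_⟩
    · rw [Matrix.conjTranspose_mul, hWU, Matrix.mul_assoc, ← Matrix.mul_assoc W W U, hWW,
        Matrix.one_mul, hU]
    · rw [Matrix.conjTranspose_mul, hWU, Matrix.mul_assoc, ← Matrix.mul_assoc W W V, hWW,
        Matrix.one_mul, hV]
    · calc (W * U)ᴴ * Matrix.diagonal ![(r₁ : ℂ), (r₂ : ℂ)] * (W * V)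
          = Uᴴ * (W * Matrix.diagonal ![(r₁ : ℂ), (r₂ : ℂ)] * W) * V := by
            rw [Matrix.conjTranspose_mul, hWU]; noncomm_ring
        _ = !![1, c; 0, 1] := by rw [hswap, hc]
end

section
/- Let A be an invertible 2×2 complex matrix with |det A| = 1. Then there exist 2×2 unitary complex matrices U and V such that U† A V is upper triangular with both diagonal entries equal to 1. -/
/-!
On the unit sphere of `ℂ²`, which is connected, the function `v ↦ ‖A v‖` is `≥ 1` in the
direction of some column of `A` and `≤ 1` in the direction of some column of `adj A`: this is
the `2 × 2` Hadamard inequality `‖det M‖ ≤ ‖M₀‖ ‖M₁‖` for `M = A` and `M = adj A`, together with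
`A adj A = det A`. Hence some unit vector `v` has `‖A v‖ = 1`. Completing `v` and `A v` to
special unitaries `!![a, -b̄; b, ā]` makes the first column of `Uᴴ A V` equal to `e₀`, and
scaling the second column of `V` by the phase `conj (det A)` makes `det (Uᴴ A V)`, which is its
`(1, 1)` entry, equal to `1`.
-/

open Matrix WithLp

section SUTwo

variable {R : Type*} [CommRing R] [StarRing R]

def suTwoOfCol (w : Fin 2 → R) : Matrix (Fin 2) (Fin 2) R :=
  !![w 0, -star (w 1); w 1, star (w 0)]

theorem suTwoOfCol_col_zero (w : Fin 2 → R) : (suTwoOfCol w).col 0 = w := by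
  ext i
  fin_cases i <;> rfl

theorem det_suTwoOfCol (w : Fin 2 → R) : (suTwoOfCol w).det = star w ⬝ᵥ w := by
  simp only [suTwoOfCol, det_fin_two_of, dotProduct, Fin.sum_univ_two, Pi.star_apply]
  ring

theorem suTwoOfCol_mem_unitaryGroup {w : Fin 2 → R} (hw : star w ⬝ᵥ w = 1) :
    suTwoOfCol w ∈ unitaryGroup (Fin 2) R := by
  simp only [dotProduct, Fin.sum_univ_two, Pi.star_apply] at hw
  rw [mem_unitaryGroup_iff']
  ext i j
  fin_cases i <;> fin_cases j <;>
    simp [suTwoOfCol, star_eq_conjTranspose, mul_apply, Fin.sum_univ_two] <;>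
    first | linear_combination hw | ring

end SUTwo

theorem diagonal_mem_unitaryGroup {n R : Type*} [Fintype n] [DecidableEq n] [CommRing R]
    [StarRing R] {d : n → R} (hd : ∀ i, star (d i) * d i = 1) :
    diagonal d ∈ unitaryGroup n R := by
  rw [mem_unitaryGroup_iff', star_eq_conjTranspose, diagonal_conjTranspose,
    diagonal_mul_diagonal, ← diagonal_one]
  exact congrArg diagonal (funext hd)

theorem col_conjTranspose_mul_mul_eq_single {m n p R : Type*} [Fintype m] [Fintype n]
    [Fintype p] [DecidableEq n] [Semiring R] [Star R] {U : Matrix m n R} {A : Matrix m p R}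
    {V : Matrix p n R} (hU : Uᴴ * U = 1) {j : n} (h : A *ᵥ V.col j = U.col j) :
    (Uᴴ * A * V).col j = Pi.single j 1 := by
  calc (Uᴴ * A * V).col j = Uᴴ *ᵥ (A *ᵥ V.col j) := by
        rw [← mulVec_single_one, ← mulVec_single_one V, mulVec_mulVec, mulVec_mulVec]
    _ = (Uᴴ * U) *ᵥ Pi.single j 1 := by rw [h, ← mulVec_single_one, mulVec_mulVec]
    _ = Pi.single j 1 := by rw [hU, one_mulVec]

theorem star_dotProduct_ofLp_self_of_norm_eq_one {𝕜 ι : Type*} [RCLike 𝕜] [Fintype ι]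
    {v : EuclideanSpace 𝕜 ι} (hv : ‖v‖ = 1) : star v.ofLp ⬝ᵥ v.ofLp = 1 := by
  rw [dotProduct_comm, ← EuclideanSpace.inner_eq_star_dotProduct, inner_self_eq_norm_sq_to_K, hv]
  simp

theorem norm_det_le_norm_col_mul_norm_col (M : Matrix (Fin 2) (Fin 2) ℂ) :
    ‖M.det‖ ≤ ‖toLp 2 (M.col 0)‖ * ‖toLp 2 (M.col 1)‖ := by
  rw [← pow_le_pow_iff_left₀ (norm_nonneg _) (by positivity) two_ne_zero, mul_pow,
    EuclideanSpace.norm_sq_eq, EuclideanSpace.norm_sq_eq]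
  simp only [det_fin_two, Fin.sum_univ_two, col_apply, ← Complex.normSq_eq_norm_sq]
  have lagrange : (Complex.normSq (M 0 0) + Complex.normSq (M 1 0)) *
      (Complex.normSq (M 0 1) + Complex.normSq (M 1 1)) =
      Complex.normSq (M 0 0 * M 1 1 - M 0 1 * M 1 0) +
        Complex.normSq (star (M 0 0) * M 0 1 + star (M 1 0) * M 1 1) := by
    simp only [Complex.normSq_apply, Complex.mul_re, Complex.mul_im, Complex.add_re,
      Complex.add_im, Complex.sub_re, Complex.sub_im, Complex.star_def, Complex.conj_re,
      Complex.conj_im]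
    ring
  linarith [Complex.normSq_nonneg (star (M 0 0) * M 0 1 + star (M 1 0) * M 1 1)]

theorem exists_one_le_norm_col {M : Matrix (Fin 2) (Fin 2) ℂ} (h : 1 ≤ ‖M.det‖) :
    ∃ j, 1 ≤ ‖toLp 2 (M.col j)‖ := by
  by_contra! hlt
  have := mul_lt_one_of_nonneg_of_lt_one_left (norm_nonneg _) (hlt 0) (hlt 1).le
  linarith [norm_det_le_norm_col_mul_norm_col M]

theorem one_lt_rank_real_euclideanSpace_complex_fin_two :
    1 < Module.rank ℝ (EuclideanSpace ℂ (Fin 2)) := by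
  apply Module.one_lt_rank_of_one_lt_finrank
  rw [finrank_real_of_complex, finrank_euclideanSpace_fin]
  norm_num

theorem exists_norm_eq_one_and_norm_toEuclideanLin_eq_one {A : Matrix (Fin 2) (Fin 2) ℂ}
    (hA : ‖A.det‖ = 1) : ∃ v : EuclideanSpace ℂ (Fin 2), ‖v‖ = 1 ∧ ‖toEuclideanLin A v‖ = 1 := by
  obtain ⟨j, hj⟩ := exists_one_le_norm_col hA.ge
  obtain ⟨k, hk⟩ := exists_one_le_norm_col (M := A.adjugate) (by simp [det_adjugate, hA])
  set y := toLp 2 (A.adjugate.col k)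
  have hy : 0 < ‖y‖ := one_pos.trans_le hk
  have hAy : ‖toEuclideanLin A y‖ = 1 := by
    have : toEuclideanLin A y = A.det • EuclideanSpace.single k 1 := by
      apply ofLp_injective 2
      change A *ᵥ A.adjugate.col k = _
      rw [← mulVec_single_one, mulVec_mulVec, mul_adjugate, smul_mulVec, one_mulVec]
      rfl
    rw [this, norm_smul, hA, PiLp.norm_single, norm_one, one_mul]
  let x := EuclideanSpace.single j (1 : ℂ)
  let u := ((‖y‖⁻¹ : ℝ) : ℂ) • y
  have hx : x ∈ Metric.sphere 0 1 := by simp [x]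
  have hu : u ∈ Metric.sphere 0 1 := by simp [u, norm_smul, hy.ne']
  have hAx : 1 ≤ ‖toEuclideanLin A x‖ := by
    convert hj using 2
    apply ofLp_injective 2
    change A *ᵥ Pi.single j 1 = _
    rw [mulVec_single_one]
  have hAu : ‖toEuclideanLin A u‖ ≤ 1 := by
    rw [map_smul, norm_smul, hAy, mul_one, Complex.norm_real, norm_inv, norm_norm]
    exact inv_le_one_of_one_le₀ hk
  obtain ⟨v, hv, hAv⟩ := (isPreconnected_sphere one_lt_rank_real_euclideanSpace_complex_fin_two
    0 1).intermediate_value hu hx (f := fun v => ‖toEuclideanLin A v‖)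
    (LinearMap.continuous_of_finiteDimensional _).norm.continuousOn ⟨hAu, hAx⟩
  exact ⟨v, by simpa using hv, hAv⟩

theorem gmd_two_unit_det_general (A : Matrix (Fin 2) (Fin 2) ℂ)
    (hdet : ‖A.det‖ = 1) :
    ∃ U V : Matrix (Fin 2) (Fin 2) ℂ,
      Uᴴ * U = 1 ∧ Vᴴ * V = 1 ∧
      (Uᴴ * A * V) 1 0 = 0 ∧ (Uᴴ * A * V) 0 0 = 1 ∧ (Uᴴ * A * V) 1 1 = 1 := by
  obtain ⟨v, hv, hAv⟩ := exists_norm_eq_one_and_norm_toEuclideanLin_eq_one hdet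
  have hv1 := star_dotProduct_ofLp_self_of_norm_eq_one hv
  have hAv1 := star_dotProduct_ofLp_self_of_norm_eq_one hAv
  have hphase : A.det * star A.det = 1 := by
    rw [Complex.star_def, Complex.mul_conj', hdet]; simp
  set U : Matrix (Fin 2) (Fin 2) ℂ := suTwoOfCol (toEuclideanLin A v).ofLp
  set V : Matrix (Fin 2) (Fin 2) ℂ := suTwoOfCol v.ofLp * diagonal ![1, star A.det]
  have hU : Uᴴ * U = 1 := mem_unitaryGroup_iff'.1 (suTwoOfCol_mem_unitaryGroup hAv1)
  have hV : Vᴴ * V = 1 := mem_unitaryGroup_iff'.1 <| mul_mem (suTwoOfCol_mem_unitaryGroup hv1)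
    (diagonal_mem_unitaryGroup (Fin.forall_fin_two.2 ⟨by simp, by simpa using hphase⟩))
  have hV0 : V.col 0 = v.ofLp := by
    rw [← mulVec_single_one, ← mulVec_mulVec, diagonal_mulVec_single]
    simp only [cons_val_zero, mul_one, mulVec_single_one, suTwoOfCol_col_zero]
  have hcol : (Uᴴ * A * V).col 0 = Pi.single 0 1 :=
    col_conjTranspose_mul_mul_eq_single hU (by rw [hV0, suTwoOfCol_col_zero]; rfl)
  have hdetB : (Uᴴ * A * V).det = 1 := by
    rw [det_mul, det_mul, det_mul, det_conjTranspose, det_suTwoOfCol, det_suTwoOfCol, hv1, hAv1,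
      det_diagonal, Fin.prod_univ_two]
    simpa using hphase
  have h10 : (Uᴴ * A * V) 1 0 = 0 := congrFun hcol 1
  have h00 : (Uᴴ * A * V) 0 0 = 1 := congrFun hcol 0
  refine ⟨U, V, hU, hV, h10, h00, ?_⟩
  rwa [det_fin_two, h10, h00, one_mul, mul_zero, sub_zero] at hdetB

/-- 1-GMD of a `2 × 2` matrix of unit determinant magnitude: if `A` is invertible and
`|det A| = 1`, then there are `2 × 2` unitary matrices `U`, `V` such that `Uᴴ A V` is
upper triangular with both diagonal entries equal to `1`. -/
theorem gmd_two_unit_det (A : Matrix (Fin 2) (Fin 2) ℂ)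
    (hA : IsUnit A.det) (hdet : ‖A.det‖ = 1) :
    ∃ U V : Matrix (Fin 2) (Fin 2) ℂ,
      Uᴴ * U = 1 ∧ Vᴴ * V = 1 ∧
      (Uᴴ * A * V) 1 0 = 0 ∧ (Uᴴ * A * V) 0 0 = 1 ∧ (Uᴴ * A * V) 1 1 = 1 :=
  gmd_two_unit_det_general A hdet
end
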